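/- Let A be a nonempty finite alphabet, S a primitive substitution on A with |S(a)| ≥ 2 for some letter a, and ω₀ : ℤ → A a configuration such that every word of length 2 occurring in ω₀ is legal for S. Then the iterated hulls converge to the substitution subshift: d_H(Ωₙ(ω₀), Ω(S)) → 0 as n → ∞. -/

import Mathlib

namespace QC

variable {A : Type*}

/-- The shift action of `ℤ` on configurations: `(m · ω)(n) = ω (n - m)`. -/
def shift (m : ℤ) (ω : ℤ → A) : ℤ → A := fun n => ω (n - m)

/-- The word `u` occurs in the configuration `ω` (at some position `k`). -/
def Occurs (u : List A) (ω : ℤ → A) : Prop :=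
  ∃ k : ℤ, u = (List.range u.length).map fun i => ω (k + i)

/-- The dictionary of a configuration: all (nonempty) words occurring in it. -/
def Dict (ω : ℤ → A) : Set (List A) := {u | u ≠ [] ∧ Occurs u ω}

/-- The set of length-`ℓ` words occurring in a configuration. -/
def DictLen (ω : ℤ → A) (ℓ : ℕ) : Set (List A) := {u | u.length = ℓ ∧ Occurs u ω}

/-- The extension of a substitution rule `S : A → List A` to words, by concatenation. -/
def wordSub (S : A → List A) (u : List A) : List A := (u.map S).flatten

/-- A word is legal for `S` if it is an infix of `Sⁿ(a)` for some letter `a` and `n : ℕ`. -/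
def Legal (S : A → List A) (u : List A) : Prop :=
  ∃ (a : A) (n : ℕ), u <:+: (wordSub S)^[n] [a]

/-- `S` is primitive: some power `p ≥ 1` of `S` maps every letter to a word containing
all letters. -/
def Primitive (S : A → List A) : Prop :=
  ∃ p : ℕ, 1 ≤ p ∧ ∀ a b : A, b ∈ (wordSub S)^[p] [a]

/-- The starting position (in `S ω`) of the block coming from the letter `ω k`. -/
def blockStart (S : A → List A) (ω : ℤ → A) (k : ℤ) : ℤ :=
  if 0 ≤ k then ((List.range k.toNat).map fun i => ((S (ω i)).length : ℤ)).sum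
  else -((List.range (-k).toNat).map fun i => ((S (ω (-(i : ℤ) - 1))).length : ℤ)).sum

open Classical in
/-- The extension of a substitution to two-sided configurations: the block structure of
`S ω` is `⋯ S(ω(-1)) . S(ω 0) S(ω 1) ⋯`, with the block of `ω 0` starting at position `0`. -/
noncomputable def confSub [Nonempty A] (S : A → List A) (ω : ℤ → A) : ℤ → A := fun n =>
  if h : ∃ k : ℤ, blockStart S ω k ≤ n ∧ n < blockStart S ω (k + 1) then
    (S (ω (Classical.choose h))).getD (n - blockStart S ω (Classical.choose h)).toNat
      (Classical.arbitrary A)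
  else Classical.arbitrary A

/-- The metric on configurations:
`d(ω₁, ω₂) = inf { 1/(r+1) : ω₁ and ω₂ agree on all |k| < r }`. -/
noncomputable def confDist (ω₁ ω₂ : ℤ → A) : ℝ :=
  sInf {x : ℝ | ∃ r : ℕ, x = 1 / (r + 1) ∧ ∀ k : ℤ, |k| < (r : ℤ) → ω₁ k = ω₂ k}

/-- Distance from a configuration to a set of configurations. -/
noncomputable def distToSet (ω : ℤ → A) (Ω : Set (ℤ → A)) : ℝ :=
  sInf (confDist ω '' Ω)

/-- The Hausdorff distance between two sets of configurations, induced by `confDist`. -/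
noncomputable def hausDist (Ω₁ Ω₂ : Set (ℤ → A)) : ℝ :=
  max (sSup ((fun ω => distToSet ω Ω₂) '' Ω₁)) (sSup ((fun ω => distToSet ω Ω₁) '' Ω₂))

/-- The product topology on `ℤ → A`, where `A` carries the discrete topology. -/
def confTop (A : Type*) : TopologicalSpace (ℤ → A) :=
  @Pi.topologicalSpace ℤ (fun _ => A) fun _ => ⊥

/-- The shift orbit of a configuration. -/
def orbit (ω : ℤ → A) : Set (ℤ → A) := {η | ∃ m : ℤ, η = shift m ω}

/-- The hull of a configuration: the closure of its shift orbit in the product topology. -/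
def hull (ω : ℤ → A) : Set (ℤ → A) := @closure _ (confTop A) (orbit ω)

/-- The `n`-th iterated hull `Ωₙ(ω₀)`: the hull of `Sⁿ(ω₀)`. -/
noncomputable def IHS [Nonempty A] (S : A → List A) (ω₀ : ℤ → A) (n : ℕ) : Set (ℤ → A) :=
  hull ((confSub S)^[n] ω₀)

/-- The substitution subshift `Ω(S) = {ω : W(ω) ⊆ W(S)}`. -/
def OmegaS (S : A → List A) : Set (ℤ → A) := {ω | ∀ u ∈ Dict ω, Legal S u}

/-- Edges of the directed graph `G(S)`: `u → w` iff `u, w` are both illegal and `w` is an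
infix of `S(u)`. -/
def GEdge (S : A → List A) (u w : List A) : Prop :=
  ¬Legal S u ∧ ¬Legal S w ∧ w <:+: wordSub S u

/-- `p` is a directed path of length `ℓ` in `G(S)` (on the vertex set of `2`-words). -/
def GPath (S : A → List A) (p : ℕ → List A) (ℓ : ℕ) : Prop :=
  (∀ i ≤ ℓ, (p i).length = 2) ∧ ∀ j < ℓ, GEdge S (p j) (p (j + 1))

/-- An initial configuration is good for `S` if every directed path in `G(S)` starting at a
`2`-word occurring in `ω₀` has length `< |A|²`. -/
def GoodInit [Fintype A] (S : A → List A) (ω₀ : ℤ → A) : Prop :=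
  ∀ (p : ℕ → List A) (ℓ : ℕ), GPath S p ℓ → Occurs (p 0) ω₀ → ℓ < (Fintype.card A) ^ 2

/-- The substitution matrix of `S`: `M(S)_{a,b}` is the number of occurrences of `a`
in `S(b)`. -/
def subMatrix [Fintype A] [DecidableEq A] (S : A → List A) : Matrix A A ℝ :=
  fun a b => ((S b).count a : ℝ)

/-- The Perron–Frobenius eigenvalue of `S`: the spectral radius of its substitution
matrix (viewed as a complex matrix). -/
noncomputable def pfEigenvalue [Fintype A] [DecidableEq A] (S : A → List A) : ℝ :=
  (spectralRadius ℂ ((subMatrix S).map (algebraMap ℝ ℂ))).toReal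

/-- The periodic configuration `u^∞`, satisfying `u^∞(n) = u(n mod |u|)`. -/
noncomputable def perConf [Nonempty A] (u : List A) : ℤ → A := fun n =>
  u.getD (n % (u.length : ℤ)).toNat (Classical.arbitrary A)

/-- `ℓ²(ℤ, ℂ)`. -/
abbrev l2Z : Type := lp (fun _ : ℤ => ℂ) 2

/-- `H` is the Schrödinger operator on `ℓ²(ℤ,ℂ)` with potential `v ∘ ω`:
`(H ψ)(n) = -(ψ(n+1) + ψ(n-1) - 2ψ(n)) + v(ω(n)) ψ(n)`. -/
def IsSchrodinger (v : A → ℝ) (ω : ℤ → A) (H : l2Z →L[ℂ] l2Z) : Prop :=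
  ∀ (ψ : l2Z) (n : ℤ),
    (H ψ : ℤ → ℂ) n = -((ψ : ℤ → ℂ) (n + 1) + (ψ : ℤ → ℂ) (n - 1) - 2 * (ψ : ℤ → ℂ) n)
      + (v (ω n) : ℂ) * (ψ : ℤ → ℂ) n

/-- The spectrum of `H`, viewed as a subset of `ℝ`. -/
def realSpectrum (H : l2Z →L[ℂ] l2Z) : Set ℝ := {x : ℝ | (x : ℂ) ∈ spectrum ℂ H}



/-! Let `m n = min_a |Sⁿ(a)|`; primitivity and `|S(a₀)| ≥ 2` give `m n → ∞`. A word of length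
at most `m n + 1` occurring in `Sⁿ(ω₀)` meets at most two blocks, so it lies in the image `Sⁿ(u)` of
a word `u` of length `≤ 2` of `ω₀`, and is legal. Conversely, by primitivity a legal word occurs in
`Sⁿ(a)` for every letter `a` once `n` is large, hence in `Sⁿ(ω₀)`. Thus for large `n` the centred
windows of radius `r` of points of `Ωₙ(ω₀)` and of `Ω(S)` are the same legal words. To approximate
points of `Ωₙ(ω₀)` one needs a point of `Ω(S)` containing every legal word: if `S^q(a) = L a R` with
`L, R` nonempty, the words `S^{qk}(a)` are nested two-sided extensions of each other, and their
union is such a point. -/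

open Filter Topology

section Window

variable {A : Type*}

def window (ω : ℤ → A) (a : ℤ) (L : ℕ) : List A := (List.range L).map fun i : ℕ => ω (a + i)

@[simp] lemma length_window (ω : ℤ → A) (a : ℤ) (L : ℕ) : (window ω a L).length = L := by
  simp [window]

@[simp] lemma getElem_window (ω : ℤ → A) (a : ℤ) (L i : ℕ) (hi : i < (window ω a L).length) :
    (window ω a L)[i] = ω (a + i) := by
  simp [window]

lemma occurs_iff_eq_window {u : List A} {ω : ℤ → A} :
    Occurs u ω ↔ ∃ a, u = window ω a u.length := by
  simp only [Occurs, window, bind_pure_comp, List.map_eq_map, List.map_map]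
  rfl

lemma occurs_window (ω : ℤ → A) (a : ℤ) (L : ℕ) : Occurs (window ω a L) ω :=
  occurs_iff_eq_window.2 ⟨a, by rw [length_window]⟩

lemma window_add (ω : ℤ → A) (a : ℤ) (L M : ℕ) :
    window ω a (L + M) = window ω a L ++ window ω (a + L) M := by
  simp only [window, List.range_add, List.map_append, List.map_map]
  congr 1
  exact List.map_congr_left fun i _ => by simp [add_assoc]

lemma window_congr {ω ω' : ℤ → A} {a : ℤ} {L : ℕ}
    (h : ∀ k, a ≤ k → k < a + L → ω k = ω' k) : window ω a L = window ω' a L :=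
  List.ext_getElem (by simp) fun i hi _ => by
    simp only [getElem_window]
    exact h _ (by omega) (by simp at hi; omega)

lemma apply_eq_getD_of_window_eq {ω : ℤ → A} {a n : ℤ} {u : List A}
    (hu : window ω a u.length = u) (h₁ : a ≤ n) (h₂ : n < a + u.length) (d : A) :
    ω n = u.getD (n - a).toNat d := by
  have hi : (n - a).toNat < (window ω a u.length).length := by simp; omega
  rw [List.getD_eq_getElem _ _ (by omega), ← List.getElem_of_eq hu hi, getElem_window]
  congr 1
  omega

lemma window_infix_window (ω : ℤ → A) {a b : ℤ} {L M : ℕ} (hab : a ≤ b) (h : b + L ≤ a + M) :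
    window ω b L <:+: window ω a M := by
  obtain ⟨d, rfl⟩ : ∃ d : ℕ, b = a + d := ⟨(b - a).toNat, by omega⟩
  obtain ⟨e, rfl⟩ : ∃ e : ℕ, M = d + (L + e) := ⟨M - d - L, by omega⟩
  rw [window_add, window_add]
  exact ⟨_, _, List.append_assoc _ _ _⟩

lemma Occurs.of_infix {u v : List A} {ω : ℤ → A} (h : u <:+: v) (hv : Occurs v ω) :
    Occurs u ω := by
  obtain ⟨s, t, rfl⟩ := h
  obtain ⟨a, ha⟩ := occurs_iff_eq_window.1 hv
  refine occurs_iff_eq_window.2 ⟨a + s.length, ?_⟩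
  have ha' : s ++ u ++ t = window ω a (s.length + (u.length + t.length)) := by
    simpa [add_assoc] using ha
  rw [window_add, window_add, ← List.append_assoc] at ha'
  exact (List.append_inj (List.append_inj ha' (by simp)).1 (by simp)).2

lemma window_shift (ω : ℤ → A) (m a : ℤ) (L : ℕ) :
    window (shift m ω) a L = window ω (a - m) L :=
  List.map_congr_left fun i _ => by simp only [shift]; ring_nf

lemma Occurs.of_shift {u : List A} {ω : ℤ → A} {m : ℤ} (h : Occurs u (shift m ω)) :
    Occurs u ω := by
  obtain ⟨a, ha⟩ := occurs_iff_eq_window.1 h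
  exact occurs_iff_eq_window.2 ⟨a - m, window_shift ω m a _ ▸ ha⟩

end Window

section WordSub

variable {A : Type*} {S : A → List A}

@[simp] lemma wordSub_nil : wordSub S [] = [] := rfl

@[simp] lemma wordSub_singleton (a : A) : wordSub S [a] = S a := by
  simp [wordSub]

@[simp] lemma wordSub_append (u v : List A) : wordSub S (u ++ v) = wordSub S u ++ wordSub S v := by
  simp [wordSub]

lemma wordSub_infix {u v : List A} (h : u <:+: v) : wordSub S u <:+: wordSub S v := by
  obtain ⟨s, t, rfl⟩ := h
  exact ⟨wordSub S s, wordSub S t, by simp⟩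

lemma wordSub_ne_nil (hS : ∀ a, S a ≠ []) {u : List A} (hu : u ≠ []) : wordSub S u ≠ [] := by
  obtain ⟨a, u, rfl⟩ := List.exists_cons_of_ne_nil hu
  simp [wordSub, hS a]

lemma mul_length_le_length_wordSub {m : ℕ} (hm : ∀ a, m ≤ (S a).length) (u : List A) :
    m * u.length ≤ (wordSub S u).length := by
  induction u with
  | nil => simp
  | cons a u ih =>
    have := hm a
    simp only [wordSub, List.map_cons, List.flatten_cons, List.length_append,
      List.length_cons] at ih ⊢
    nlinarith

@[simp] lemma iterate_wordSub_nil (n : ℕ) : (wordSub S)^[n] [] = [] :=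
  Function.iterate_fixed rfl n

lemma iterate_wordSub_append (n : ℕ) (u v : List A) :
    (wordSub S)^[n] (u ++ v) = (wordSub S)^[n] u ++ (wordSub S)^[n] v := by
  induction n generalizing u v with
  | zero => rfl
  | succ n ih => simp only [Function.iterate_succ_apply, wordSub_append, ih]

lemma iterate_wordSub_cons (n : ℕ) (a : A) (u : List A) :
    (wordSub S)^[n] (a :: u) = (wordSub S)^[n] [a] ++ (wordSub S)^[n] u :=
  iterate_wordSub_append n [a] u

lemma iterate_wordSub_eq_wordSub (n : ℕ) (u : List A) :
    (wordSub S)^[n] u = wordSub (fun a => (wordSub S)^[n] [a]) u := by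
  induction u with
  | nil => simp
  | cons a u ih =>
    rw [iterate_wordSub_cons n a u, ih]
    rfl

lemma iterate_wordSub_infix (n : ℕ) {u v : List A} (h : u <:+: v) :
    (wordSub S)^[n] u <:+: (wordSub S)^[n] v := by
  rw [iterate_wordSub_eq_wordSub, iterate_wordSub_eq_wordSub n v]
  exact wordSub_infix h

lemma iterate_wordSub_ne_nil (hS : ∀ a, S a ≠ []) (n : ℕ) {u : List A} (hu : u ≠ []) :
    (wordSub S)^[n] u ≠ [] := by
  induction n with
  | zero => exact hu
  | succ n ih => rw [Function.iterate_succ_apply']; exact wordSub_ne_nil hS ih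

end WordSub

section Legal

variable {A : Type*} {S : A → List A}

lemma Legal.of_infix {u v : List A} (h : u <:+: v) (hv : Legal S v) : Legal S u := by
  obtain ⟨a, n, hn⟩ := hv
  exact ⟨a, n, h.trans hn⟩

lemma Legal.iterate {u : List A} (n : ℕ) (h : Legal S u) : Legal S ((wordSub S)^[n] u) := by
  obtain ⟨a, m, hm⟩ := h
  exact ⟨a, n + m, Function.iterate_add_apply .. ▸ iterate_wordSub_infix n hm⟩

lemma legal_singleton (a : A) : Legal S [a] := ⟨a, 0, List.infix_refl _⟩

lemma legal_nil [Nonempty A] : Legal S [] := ⟨Classical.arbitrary A, 0, List.nil_infix⟩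

variable {p : ℕ} (hS : ∀ a, S a ≠ []) (hp : ∀ a b, b ∈ (wordSub S)^[p] [a])
include hS hp

lemma mem_iterate_wordSub_of_le {n : ℕ} (hn : p ≤ n) (a b : A) : b ∈ (wordSub S)^[n] [a] := by
  obtain ⟨i, rfl⟩ := Nat.exists_eq_add_of_le hn
  obtain ⟨c, hc⟩ :=
    List.exists_mem_of_ne_nil _ (iterate_wordSub_ne_nil hS i (List.cons_ne_nil a []))
  rw [Function.iterate_add_apply]
  exact (iterate_wordSub_infix p ((List.singleton_infix_iff c _).2 hc)).subset (hp c b)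

lemma Legal.eventually_infix_iterate {w : List A} (hw : Legal S w) :
    ∀ᶠ n in atTop, ∀ a, w <:+: (wordSub S)^[n] [a] := by
  obtain ⟨b, m, hm⟩ := hw
  filter_upwards [eventually_ge_atTop (p + m)] with n hn a
  obtain ⟨i, rfl⟩ := Nat.exists_eq_add_of_le (le_of_add_le_right hn)
  rw [Function.iterate_add_apply]
  refine hm.trans (iterate_wordSub_infix m ?_)
  exact (List.singleton_infix_iff b _).2 (mem_iterate_wordSub_of_le hS hp (by omega) a b)

lemma eventually_forall_legal_infix_iterate [Fintype A] (m : ℕ) :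
    ∀ᶠ n in atTop, ∀ w : List A, w.length = m → Legal S w → ∀ a, w <:+: (wordSub S)^[n] [a] := by
  have : ∀ᶠ n in atTop, ∀ v : List.Vector A m, Legal S v.1 → ∀ a, v.1 <:+: (wordSub S)^[n] [a] :=
    eventually_all.2 fun v => by
      by_cases hv : Legal S v.1
      · filter_upwards [hv.eventually_infix_iterate hS hp] with n hn using fun _ => hn
      · exact .of_forall fun _ h => absurd h hv
  filter_upwards [this] with n hn w hw using hn ⟨w, hw⟩

end Legal

section Growth

variable {A : Type*} {S : A → List A} (hS : ∀ a, S a ≠ [])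

include hS in
lemma monotone_length_iterate_wordSub (u : List A) :
    Monotone fun n => ((wordSub S)^[n] u).length := by
  refine monotone_nat_of_le_succ fun n => ?_
  rw [Function.iterate_succ_apply']
  simpa using mul_length_le_length_wordSub (fun a => List.length_pos_iff.2 (hS a)) _

variable {p : ℕ} (hp : ∀ a b, b ∈ (wordSub S)^[p] [a]) {a₀ : A} (ha₀ : 2 ≤ (S a₀).length)
include hp ha₀

lemma two_le_length_iterate_wordSub (a : A) : 2 ≤ ((wordSub S)^[p + 1] [a]).length := by
  rw [Function.iterate_succ_apply']
  calc 2 ≤ (S a₀).length := ha₀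
    _ ≤ _ := (wordSub_singleton (S := S) a₀ ▸
      wordSub_infix ((List.singleton_infix_iff a₀ _).2 (hp a a₀))).length_le

include hS

lemma eventually_le_length_iterate_wordSub (m : ℕ) :
    ∀ᶠ n in atTop, ∀ a, m ≤ ((wordSub S)^[n] [a]).length := by
  have hgrow : ∀ k a, k + 1 ≤ ((wordSub S)^[k * (p + 1)] [a]).length := by
    intro k
    induction k with
    | zero => simp
    | succ k ih =>
      intro a
      rw [Nat.succ_mul, Function.iterate_add_apply, iterate_wordSub_eq_wordSub]
      have := mul_length_le_length_wordSub ih ((wordSub S)^[p + 1] [a])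
      have := two_le_length_iterate_wordSub hp ha₀ a
      nlinarith
  filter_upwards [eventually_ge_atTop (m * (p + 1))] with n hn a
  exact (Nat.le_succ m).trans ((hgrow m a).trans (monotone_length_iterate_wordSub hS _ hn))

lemma exists_iterate_wordSub_eq_append_cons_append (a : A) :
    ∃ q L R, 0 < q ∧ (wordSub S)^[q] [a] = L ++ a :: R ∧ L ≠ [] ∧ R ≠ [] := by
  obtain ⟨n, hn, hn1⟩ :=
    ((eventually_le_length_iterate_wordSub hS hp ha₀ 3).and (eventually_ge_atTop 1)).exists
  obtain ⟨c₁, c₂, w, hw, hcw⟩ : ∃ c₁ c₂ w, w ≠ [] ∧ (wordSub S)^[n] [a] = c₁ :: c₂ :: w := by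
    have := hn a
    match (wordSub S)^[n] [a], this with
    | c₁ :: c₂ :: c₃ :: w, _ => exact ⟨c₁, c₂, c₃ :: w, List.cons_ne_nil _ _, rfl⟩
  obtain ⟨s, t, hst⟩ := List.append_of_mem (hp c₂ a)
  refine ⟨p + n, (wordSub S)^[p] [c₁] ++ s, t ++ (wordSub S)^[p] w, by omega, ?_,
    by simp [iterate_wordSub_ne_nil hS p (List.cons_ne_nil c₁ [])],
    by simp [iterate_wordSub_ne_nil hS p hw]⟩
  rw [Function.iterate_add_apply, hcw, iterate_wordSub_cons p c₁, iterate_wordSub_cons p c₂, hst]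
  simp

end Growth

section NestedLimit

variable {A : Type*}

/-- The position of the first letter of `W 0` inside `W k` when `W (k + 1) = L k ++ W k ++ R k`. -/
def nestedOffset (L : ℕ → List A) : ℕ → ℕ
  | 0 => 0
  | k + 1 => (L k).length + nestedOffset L k

noncomputable def nestedLimit [Nonempty A] (W L : ℕ → List A) (n : ℤ) : A :=
  (W n.natAbs).getD (n + nestedOffset L n.natAbs).toNat (Classical.arbitrary A)

variable {W L R : ℕ → List A}

lemma monotone_nestedOffset : Monotone (nestedOffset L) :=
  monotone_nat_of_le_succ fun _ => Nat.le_add_left _ _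

lemma le_nestedOffset (hL : ∀ k, L k ≠ []) (k : ℕ) : k ≤ nestedOffset L k := by
  induction k with
  | zero => exact le_rfl
  | succ k ih => have := List.length_pos_iff.2 (hL k); simp only [nestedOffset]; omega

variable (hWLR : ∀ k, W (k + 1) = L k ++ W k ++ R k)
include hWLR

lemma nestedOffset_add_length_le {k k' : ℕ} (h : k ≤ k') :
    nestedOffset L k' + (W k).length ≤ nestedOffset L k + (W k').length := by
  induction k', h using Nat.le_induction with
  | base => rfl
  | succ n _ ih => simp only [nestedOffset, hWLR n, List.length_append]; omega

lemma nestedOffset_add_lt_length (hR : ∀ k, R k ≠ []) (hW : W 0 ≠ []) (k : ℕ) :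
    nestedOffset L k + k < (W k).length := by
  induction k with
  | zero => exact List.length_pos_iff.2 hW
  | succ k ih =>
    have := List.length_pos_iff.2 (hR k)
    simp only [nestedOffset, hWLR k, List.length_append]
    omega

lemma getD_nested_of_le {k k' : ℕ} (h : k ≤ k') {i : ℕ} (hi : i < (W k).length) (d : A) :
    (W k').getD (nestedOffset L k' - nestedOffset L k + i) d = (W k).getD i d := by
  induction k', h using Nat.le_induction with
  | base => simp
  | succ n hkn ih =>
    have hc := monotone_nestedOffset (L := L) hkn
    have hlen := nestedOffset_add_length_le hWLR hkn
    have hsucc : nestedOffset L (n + 1) = (L n).length + nestedOffset L n := rfl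
    rw [hWLR n, List.getD_append _ _ _ _ (by simp only [List.length_append]; omega),
      List.getD_append_right _ _ _ _ (by omega)]
    convert ih using 2
    omega

variable [Nonempty A] (hL : ∀ k, L k ≠ []) (hR : ∀ k, R k ≠ []) (hW : W 0 ≠ [])
include hL hR hW

lemma window_nestedLimit (k : ℕ) :
    window (nestedLimit W L) (-nestedOffset L k) (W k).length = W k := by
  refine List.ext_getElem (length_window ..) fun i hi hi' => ?_
  set K := (-(nestedOffset L k : ℤ) + i).natAbs
  have hkM := getD_nested_of_le hWLR (le_max_left k K) hi' (Classical.arbitrary A)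
  have hK := nestedOffset_add_lt_length hWLR hR hW K
  have hKc := le_nestedOffset hL K
  have hMk := monotone_nestedOffset (L := L) (le_max_left k K)
  have hMK := monotone_nestedOffset (L := L) (le_max_right k K)
  have hKM := getD_nested_of_le hWLR (le_max_right k K)
    (i := (-(nestedOffset L k : ℤ) + i + nestedOffset L K).toNat) (by omega) (Classical.arbitrary A)
  rw [getElem_window, ← List.getD_eq_getElem _ (Classical.arbitrary A), ← hkM]
  simp only [nestedLimit]
  rw [← hKM]
  congr 1
  omega

lemma occurs_nestedLimit_iff (u : List A) : Occurs u (nestedLimit W L) ↔ ∃ k, u <:+: W k := by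
  constructor
  · intro hu
    obtain ⟨a, ha⟩ := occurs_iff_eq_window.1 hu
    set k := a.natAbs + u.length
    have := nestedOffset_add_lt_length hWLR hR hW k
    have := le_nestedOffset hL k
    refine ⟨k, ha ▸ window_nestedLimit hWLR hL hR hW k ▸ window_infix_window _ ?_ ?_⟩ <;> omega
  · rintro ⟨k, hk⟩
    exact Occurs.of_infix hk (window_nestedLimit hWLR hL hR hW k ▸ occurs_window ..)

end NestedLimit

lemma exists_mem_OmegaS_forall_legal_occurs {A : Type*} [Nonempty A] {S : A → List A}
    (hS : ∀ a, S a ≠ []) {p : ℕ} (hp : ∀ a b, b ∈ (wordSub S)^[p] [a]) {a₀ : A}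
    (ha₀ : 2 ≤ (S a₀).length) :
    ∃ ω ∈ OmegaS S, ∀ w, Legal S w → Occurs w ω := by
  obtain ⟨q, L, R, hq, hqa, hL, hR⟩ := exists_iterate_wordSub_eq_append_cons_append hS hp ha₀ a₀
  have hWLR : ∀ k, (wordSub S)^[q * (k + 1)] [a₀]
      = (wordSub S)^[q * k] L ++ (wordSub S)^[q * k] [a₀] ++ (wordSub S)^[q * k] R := by
    intro k
    rw [Nat.mul_succ, Function.iterate_add_apply, hqa, iterate_wordSub_append,
      iterate_wordSub_cons, List.append_assoc]
  have hocc := occurs_nestedLimit_iff (W := fun k => (wordSub S)^[q * k] [a₀])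
    (L := fun k => (wordSub S)^[q * k] L) (R := fun k => (wordSub S)^[q * k] R) hWLR
    (fun _ => iterate_wordSub_ne_nil hS _ hL) (fun _ => iterate_wordSub_ne_nil hS _ hR) (by simp)
  refine ⟨_, fun u hu => ?_, fun w hw => (hocc w).2 ?_⟩
  · obtain ⟨k, hk⟩ := (hocc u).1 hu.2
    exact ⟨a₀, q * k, hk⟩
  · obtain ⟨k, hk⟩ := ((tendsto_id.const_mul_atTop' hq).eventually
      (hw.eventually_infix_iterate hS hp)).exists
    exact ⟨k, hk a₀⟩

lemma add_sub_le_of_lt_succ {f : ℤ → ℤ} (hf : ∀ k, f k < f (k + 1)) {k l : ℤ} (h : k ≤ l) :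
    f k + (l - k) ≤ f l := by
  induction l, h using Int.leInduction with
  | base => simp
  | succ l _ ih => have := hf l; omega

lemma exists_le_lt_succ_of_lt_succ {f : ℤ → ℤ} (hf : ∀ k, f k < f (k + 1)) (n : ℤ) :
    ∃ k, f k ≤ n ∧ n < f (k + 1) := by
  obtain ⟨k, hk, hmax⟩ := Int.exists_greatest_of_bdd (P := fun k => f k ≤ n)
    ⟨|n - f 0|, fun k hk => by
      by_contra! h
      have := add_sub_le_of_lt_succ hf (by have := abs_nonneg (n - f 0); omega : 0 ≤ k)
      have := le_abs_self (n - f 0)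
      omega⟩
    ⟨-|n - f 0|, by
      have := add_sub_le_of_lt_succ hf (by simp : -|n - f 0| ≤ 0)
      have := neg_abs_le (n - f 0)
      omega⟩
  exact ⟨k, hk, not_le.1 fun h => by have := hmax _ h; omega⟩

lemma eq_of_le_lt_succ_of_lt_succ {f : ℤ → ℤ} (hf : ∀ k, f k < f (k + 1)) {k k' n : ℤ}
    (h : f k ≤ n ∧ n < f (k + 1)) (h' : f k' ≤ n ∧ n < f (k' + 1)) : k = k' := by
  by_contra hne
  rcases lt_or_gt_of_ne hne with hlt | hlt
  · have := add_sub_le_of_lt_succ hf (by omega : k + 1 ≤ k'); omega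
  · have := add_sub_le_of_lt_succ hf (by omega : k' + 1 ≤ k); omega

section Blocks

variable {A : Type*} {T : A → List A} {ω : ℤ → A}

lemma blockStart_zero : blockStart T ω 0 = 0 := by
  simp [blockStart]

lemma blockStart_natCast (m : ℕ) :
    blockStart T ω m = ((List.range m).map fun i : ℕ => ((T (ω i)).length : ℤ)).sum := by
  simp only [blockStart, Int.natCast_nonneg, if_true, Int.toNat_natCast, bind_pure_comp,
    List.map_eq_map, List.map_map]
  rfl

lemma blockStart_neg_natCast (m : ℕ) :
    blockStart T ω (-m) = -((List.range m).map fun i : ℕ => ((T (ω (-i - 1))).length : ℤ)).sum := by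
  rcases Nat.eq_zero_or_pos m with rfl | hm
  · simp [blockStart]
  simp only [blockStart, show ¬ (0 : ℤ) ≤ -m by omega, if_false, neg_neg, Int.toNat_natCast,
    bind_pure_comp, List.map_eq_map, List.map_map]
  rfl

lemma blockStart_succ (k : ℤ) :
    blockStart T ω (k + 1) = blockStart T ω k + (T (ω k)).length := by
  obtain ⟨m, rfl | rfl⟩ := Int.eq_nat_or_neg k
  · rw [← Nat.cast_succ, blockStart_natCast, blockStart_natCast, List.range_succ]
    simp
  · rcases m with _ | m
    · simp [blockStart]
    · rw [show -((m + 1 : ℕ) : ℤ) + 1 = -m by push_cast; ring, blockStart_neg_natCast,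
        blockStart_neg_natCast, List.range_succ]
      simp only [List.map_append, List.sum_append, List.map_cons, List.map_nil, List.sum_cons,
        List.sum_nil]
      push_cast
      ring_nf

lemma eq_blockStart {b : ℤ → ℤ} (h0 : b 0 = 0) (hb : ∀ k, b (k + 1) = b k + (T (ω k)).length) :
    b = blockStart T ω := by
  funext k
  induction k using Int.induction_on with
  | zero => rw [h0, blockStart_zero]
  | succ i ih => rw [hb, blockStart_succ, ih]
  | pred i ih =>
    have h := hb (-i - 1)
    have h' := blockStart_succ (T := T) (ω := ω) (-i - 1)
    rw [sub_add_cancel] at h h'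
    omega

lemma blockStart_lt_succ (hT : ∀ a, T a ≠ []) (k : ℤ) :
    blockStart T ω k < blockStart T ω (k + 1) := by
  have := List.length_pos_iff.2 (hT (ω k))
  rw [blockStart_succ]
  omega

variable [Nonempty A]

lemma confSub_apply (hT : ∀ a, T a ≠ []) {k n : ℤ}
    (h : blockStart T ω k ≤ n ∧ n < blockStart T ω (k + 1)) :
    confSub T ω n = (T (ω k)).getD (n - blockStart T ω k).toNat (Classical.arbitrary A) := by
  have hex : ∃ k, blockStart T ω k ≤ n ∧ n < blockStart T ω (k + 1) := ⟨k, h⟩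
  rw [confSub, dif_pos hex,
    eq_of_le_lt_succ_of_lt_succ (blockStart_lt_succ hT) (Classical.choose_spec hex) h]

lemma window_confSub_blockStart (hT : ∀ a, T a ≠ []) (k : ℤ) :
    window (confSub T ω) (blockStart T ω k) (T (ω k)).length = T (ω k) := by
  refine List.ext_getElem (length_window ..) fun i hi hi' => ?_
  have := blockStart_succ (T := T) (ω := ω) k
  rw [getElem_window, confSub_apply hT (k := k) ⟨by omega, by simp at hi; omega⟩,
    List.getD_eq_getElem _ _ (by omega)]
  simp

lemma eq_confSub_of_window_blockStart (hT : ∀ a, T a ≠ []) {σ : ℤ → A}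
    (hσ : ∀ k, window σ (blockStart T ω k) (T (ω k)).length = T (ω k)) : σ = confSub T ω := by
  funext n
  obtain ⟨k, hk₁, hk₂⟩ := exists_le_lt_succ_of_lt_succ (blockStart_lt_succ (ω := ω) hT) n
  rw [blockStart_succ] at hk₂
  rw [apply_eq_getD_of_window_eq (hσ k) hk₁ hk₂ (Classical.arbitrary A),
    apply_eq_getD_of_window_eq (window_confSub_blockStart hT k) hk₁ hk₂]

end Blocks

section Composition

variable {A : Type*} [Nonempty A] {S T : A → List A}

lemma wordSub_window_eq_window_confSub (hT : ∀ a, T a ≠ []) (ω : ℤ → A) (k : ℤ) (t : ℕ) :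
    wordSub T (window ω k t) = window (confSub T ω) (blockStart T ω k)
      (blockStart T ω (k + t) - blockStart T ω k).toNat := by
  induction t with
  | zero => simp [window]
  | succ t ih =>
    have hmono := add_sub_le_of_lt_succ (blockStart_lt_succ (ω := ω) hT) (by omega : k ≤ k + t)
    have hsucc := blockStart_succ (T := T) (ω := ω) (k + t)
    rw [window_add, wordSub_append, ih, show window ω (k + t) 1 = [ω (k + t)] by simp [window],
      wordSub_singleton, ← window_confSub_blockStart hT (k + t)]
    rw [show (blockStart T ω (k + (t + 1 : ℕ)) - blockStart T ω k).toNat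
        = (blockStart T ω (k + t) - blockStart T ω k).toNat + (T (ω (k + t))).length by
      push_cast; rw [← add_assoc, hsucc]; omega, window_add]
    congr 2
    omega

lemma confSub_confSub (hS : ∀ a, S a ≠ []) (hT : ∀ a, T a ≠ []) (ω : ℤ → A) :
    confSub S (confSub T ω) = confSub (fun a => wordSub S (T a)) ω := by
  set σ := confSub T ω
  have hblock : ∀ k, wordSub S (T (ω k)) = window (confSub S σ) (blockStart S σ (blockStart T ω k))
      (blockStart S σ (blockStart T ω (k + 1)) - blockStart S σ (blockStart T ω k)).toNat := by
    intro k
    rw [blockStart_succ, ← wordSub_window_eq_window_confSub hS, window_confSub_blockStart hT]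
  have hstart : (fun k => blockStart S σ (blockStart T ω k))
      = blockStart (fun a => wordSub S (T a)) ω := by
    refine eq_blockStart (by simp [blockStart_zero]) fun k => ?_
    have hlen := congrArg List.length (hblock k)
    have hlt := blockStart_lt_succ (ω := ω) hT k
    have := add_sub_le_of_lt_succ (blockStart_lt_succ (ω := σ) hS) hlt.le
    simp only [length_window] at hlen
    omega
  refine eq_confSub_of_window_blockStart (fun a => wordSub_ne_nil hS (hT a)) fun k => ?_
  rw [← hstart]
  conv_lhs => rw [hblock k, length_window]
  exact (hblock k).symm

lemma confSub_singleton (ω : ℤ → A) : confSub (fun a => [a]) ω = ω := by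
  have hstart : blockStart (fun a => [a]) ω = id :=
    (eq_blockStart (T := fun a => [a]) rfl fun k => by simp).symm
  exact (eq_confSub_of_window_blockStart (fun a => List.cons_ne_nil a [])
    fun k => by simp [hstart, window]).symm

lemma iterate_confSub (hS : ∀ a, S a ≠ []) (n : ℕ) (ω : ℤ → A) :
    (confSub S)^[n] ω = confSub (fun a => (wordSub S)^[n] [a]) ω := by
  induction n generalizing ω with
  | zero => exact (confSub_singleton ω).symm
  | succ n ih =>
    rw [Function.iterate_succ_apply, ih,
      confSub_confSub (fun a => iterate_wordSub_ne_nil hS n (List.cons_ne_nil a [])) hS]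
    congr with a : 2
    rw [← iterate_wordSub_eq_wordSub, ← wordSub_singleton (S := S), ← Function.iterate_succ_apply]

lemma Occurs.wordSub_confSub (hT : ∀ a, T a ≠ []) {u : List A} {ω : ℤ → A} (h : Occurs u ω) :
    Occurs (wordSub T u) (confSub T ω) := by
  obtain ⟨a, ha⟩ := occurs_iff_eq_window.1 h
  rw [ha, wordSub_window_eq_window_confSub hT]
  exact occurs_window ..

lemma Occurs.iterate_confSub (hS : ∀ a, S a ≠ []) (n : ℕ) {u : List A} {ω : ℤ → A}
    (h : Occurs u ω) : Occurs ((wordSub S)^[n] u) ((confSub S)^[n] ω) := by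
  rw [QC.iterate_confSub hS, iterate_wordSub_eq_wordSub]
  exact h.wordSub_confSub fun a => iterate_wordSub_ne_nil hS n (List.cons_ne_nil a [])

/-- `w` meets at most two blocks of `T(ω)`, all blocks having length at least `m`. -/
lemma exists_infix_wordSub_of_occurs_confSub (hT : ∀ a, T a ≠ []) {m : ℕ}
    (hm : ∀ a, m ≤ (T a).length) {w : List A} {ω : ℤ → A} (hw : Occurs w (confSub T ω))
    (h₁ : 1 ≤ w.length) (h₂ : w.length ≤ m + 1) :
    ∃ u, Occurs u ω ∧ u.length ≤ 2 ∧ w <:+: wordSub T u := by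
  have hlt := blockStart_lt_succ (ω := ω) hT
  obtain ⟨j, hj⟩ := occurs_iff_eq_window.1 hw
  obtain ⟨k₁, hk₁, hk₁'⟩ := exists_le_lt_succ_of_lt_succ hlt j
  obtain ⟨k₂, hk₂, hk₂'⟩ := exists_le_lt_succ_of_lt_succ hlt (j + w.length - 1)
  have hk₁₂ : k₁ ≤ k₂ := by
    by_contra! h
    have := add_sub_le_of_lt_succ hlt (by omega : k₂ + 1 ≤ k₁)
    omega
  have hk₂₁ : k₂ ≤ k₁ + 1 := by
    by_contra! h
    have := add_sub_le_of_lt_succ hlt (by omega : k₁ + 1 + 1 ≤ k₂)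
    have := blockStart_succ (T := T) (ω := ω) (k₁ + 1)
    have := hm (ω (k₁ + 1))
    omega
  have := add_sub_le_of_lt_succ hlt (by omega : k₁ ≤ k₂ + 1)
  refine ⟨window ω k₁ (k₂ - k₁ + 1).toNat, occurs_window .., by simp; omega, ?_⟩
  rw [wordSub_window_eq_window_confSub hT, hj]
  refine window_infix_window _ hk₁ ?_
  rw [show k₁ + ((k₂ - k₁ + 1).toNat : ℤ) = k₂ + 1 by omega]
  omega

end Composition

lemma legal_of_occurs_iterate_confSub {A : Type*} [Nonempty A] {S : A → List A}
    (hS : ∀ a, S a ≠ []) {ω₀ : ℤ → A} (hleg : ∀ u : List A, u.length = 2 → Occurs u ω₀ → Legal S u)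
    {n m : ℕ} (hm : ∀ a, m ≤ ((wordSub S)^[n] [a]).length) {w : List A}
    (hw : Occurs w ((confSub S)^[n] ω₀)) (h₁ : 1 ≤ w.length) (h₂ : w.length ≤ m + 1) :
    Legal S w := by
  rw [iterate_confSub hS] at hw
  obtain ⟨u, hu, hu₂, hwu⟩ := exists_infix_wordSub_of_occurs_confSub
    (fun a => iterate_wordSub_ne_nil hS n (List.cons_ne_nil a [])) hm hw h₁ h₂
  rw [← iterate_wordSub_eq_wordSub] at hwu
  refine (Legal.iterate n ?_).of_infix hwu
  match u, hu₂ with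
  | [], _ => exact legal_nil
  | [a], _ => exact legal_singleton a
  | [a, b], _ => exact hleg _ rfl hu

section Distance

variable {A : Type*}

lemma confDist_le_of_agree {ω₁ ω₂ : ℤ → A} {r : ℕ} (h : ∀ k : ℤ, |k| < r → ω₁ k = ω₂ k) :
    confDist ω₁ ω₂ ≤ 1 / (r + 1) :=
  csInf_le ⟨0, by rintro x ⟨r', rfl, -⟩; positivity⟩ ⟨r, rfl, h⟩

lemma confDist_nonneg (ω₁ ω₂ : ℤ → A) : 0 ≤ confDist ω₁ ω₂ :=
  Real.sInf_nonneg <| by rintro x ⟨r, rfl, -⟩; positivity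

lemma distToSet_nonneg (ω : ℤ → A) (Ω : Set (ℤ → A)) : 0 ≤ distToSet ω Ω :=
  Real.sInf_nonneg <| by rintro _ ⟨η, -, rfl⟩; exact confDist_nonneg ω η

lemma distToSet_le_of_mem {ω η : ℤ → A} {Ω : Set (ℤ → A)} (hη : η ∈ Ω) :
    distToSet ω Ω ≤ confDist ω η :=
  csInf_le ⟨0, by rintro _ ⟨η, -, rfl⟩; exact confDist_nonneg ω η⟩ ⟨η, hη, rfl⟩

lemma distToSet_le_of_occurs {ω σ : ℤ → A} {Ω : Set (ℤ → A)} (hΩ : ∀ m, shift m σ ∈ Ω) {r : ℕ}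
    (h : Occurs (window ω (-r) (2 * r + 1)) σ) : distToSet ω Ω ≤ 1 / (r + 1) := by
  obtain ⟨j, hj⟩ := occurs_iff_eq_window.1 h
  rw [length_window] at hj
  refine (distToSet_le_of_mem (hΩ (-r - j))).trans (confDist_le_of_agree fun k hk => ?_)
  have hk' := abs_lt.1 hk
  have := List.getElem_of_eq hj (i := (k + r).toNat) (by simp; omega)
  simp only [getElem_window] at this
  rw [show -(r : ℤ) + (k + r).toNat = k by omega] at this
  rw [this, shift]
  congr 1
  omega

lemma hausDist_nonneg (Ω₁ Ω₂ : Set (ℤ → A)) : 0 ≤ hausDist Ω₁ Ω₂ :=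
  le_max_of_le_left <| Real.sSup_nonneg <| by rintro _ ⟨ω, -, rfl⟩; exact distToSet_nonneg _ _

lemma hausDist_le {Ω₁ Ω₂ : Set (ℤ → A)} {c : ℝ} (hc : 0 ≤ c)
    (h₁ : ∀ ω ∈ Ω₁, distToSet ω Ω₂ ≤ c) (h₂ : ∀ ω ∈ Ω₂, distToSet ω Ω₁ ≤ c) :
    hausDist Ω₁ Ω₂ ≤ c :=
  max_le (Real.sSup_le (by rintro _ ⟨ω, hω, rfl⟩; exact h₁ ω hω) hc)
    (Real.sSup_le (by rintro _ ⟨ω, hω, rfl⟩; exact h₂ ω hω) hc)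

lemma tendsto_nhds_zero_of_le_one_div_succ {ι : Type*} {l : Filter ι} {f : ι → ℝ}
    (h₀ : ∀ x, 0 ≤ f x) (h : ∀ r : ℕ, ∀ᶠ x in l, f x ≤ 1 / (r + 1)) : Tendsto f l (𝓝 0) := by
  refine tendsto_order.2 ⟨fun a ha => .of_forall fun x => ha.trans_le (h₀ x), fun ε hε => ?_⟩
  obtain ⟨r, hr⟩ := exists_nat_one_div_lt hε
  filter_upwards [h r] with x hx using hx.trans_lt hr

end Distance

section Hull

variable {A : Type*}

lemma shift_mem_hull (σ : ℤ → A) (m : ℤ) : shift m σ ∈ hull σ :=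
  @subset_closure _ (confTop A) (orbit σ) (shift m σ) ⟨m, rfl⟩

lemma Occurs.of_mem_hull {σ η : ℤ → A} (hη : η ∈ hull σ) {u : List A} (hu : Occurs u η) :
    Occurs u σ := by
  let _ : TopologicalSpace A := ⊥
  have _ : DiscreteTopology A := ⟨rfl⟩
  let _ : TopologicalSpace (ℤ → A) := confTop A
  obtain ⟨a, ha⟩ := occurs_iff_eq_window.1 hu
  let cylinder := (Finset.Ico a (a + u.length) : Set ℤ).pi fun k => {η k}
  have hopen : IsOpen cylinder :=
    isOpen_set_pi (Finset.finite_toSet _) fun _ _ => isOpen_discrete _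
  obtain ⟨_, hζ, m, rfl⟩ := _root_.mem_closure_iff.1 hη cylinder hopen (by simp [cylinder])
  have hwin : window (shift m σ) a u.length = window η a u.length :=
    window_congr fun k h₁ h₂ => hζ k (by simp; omega)
  exact Occurs.of_shift (occurs_iff_eq_window.2 ⟨a, ha.trans hwin.symm⟩)

lemma shift_mem_OmegaS {S : A → List A} {ω : ℤ → A} (h : ω ∈ OmegaS S) (m : ℤ) :
    shift m ω ∈ OmegaS S :=
  fun u hu => h u ⟨hu.1, hu.2.of_shift⟩

end Hull

/-- if all `2`-words of `ω₀` are legal, the iterated hulls converge to the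
substitution subshift. -/
theorem stmt15 {A : Type*} [Fintype A] [Nonempty A] (S : A → List A) (hS : ∀ a, S a ≠ [])
    (hprim : Primitive S) (hexp : ∃ a, 2 ≤ (S a).length) (ω₀ : ℤ → A)
    (hleg : ∀ u : List A, u.length = 2 → Occurs u ω₀ → Legal S u) :
    Filter.Tendsto (fun n : ℕ => hausDist (IHS S ω₀ n) (OmegaS S))
      Filter.atTop (nhds 0) := by
  obtain ⟨p, -, hp⟩ := hprim
  obtain ⟨a₀, ha₀⟩ := hexp
  obtain ⟨ω, hω, hωlegal⟩ := exists_mem_OmegaS_forall_legal_occurs hS hp ha₀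
  refine tendsto_nhds_zero_of_le_one_div_succ (fun n => hausDist_nonneg _ _) fun r => ?_
  filter_upwards [eventually_le_length_iterate_wordSub hS hp ha₀ (2 * r),
    eventually_forall_legal_infix_iterate hS hp (2 * r + 1)] with n hlen hinfix
  refine hausDist_le (by positivity) (fun η hη => ?_) (fun η hη => ?_)
  · refine distToSet_le_of_occurs (shift_mem_OmegaS hω) (hωlegal _ ?_)
    exact legal_of_occurs_iterate_confSub hS hleg hlen ((occurs_window ..).of_mem_hull hη)
      (by simp) (by simp)
  · have hlegal := hη (window η (-r) (2 * r + 1))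
      ⟨List.ne_nil_of_length_eq_add_one (length_window ..), occurs_window ..⟩
    refine distToSet_le_of_occurs (shift_mem_hull _) (Occurs.of_infix
      (hinfix _ (length_window ..) hlegal (ω₀ 0)) (Occurs.iterate_confSub hS n ?_))
    exact occurs_iff_eq_window.2 ⟨0, by simp [window]⟩

end QC
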